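/- Let A ∈ M_{n}(R) over a commutative ring R, and suppose v is an index such that deleting row/column v disconnects the remaining indices into two blocks with zero interaction. If the diagonal entry at v is written as a sum a₁ + a₂ distributed to the two sides, then for any subset T of the second block's indices, the same three-term coalescence identity holds for the characteristic polynomials with rows/columns in T deleted: p_{𝒢,T}(x) = p_{G,r}(x)·p_{H,T}(x) + p_{G}(x)·p_{H,T∪{v}}(x) − x·p_{G,r}(x)·p_{H,T∪{v}}(x). -/

import Mathlib

/-!
Write `q_G := p_G − (x − a₁)·p_{G,r}` and `q_H := p_{H,T} − (x − a₂)·p_{H,T∪{v}}` for the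
parts of the bordered characteristic polynomials that do not come from the corner entry.
The determinant of `xI − 𝒢` is linear in the row of `v`; splitting that row into its corner,
`G`-part and `H`-part, each summand becomes block triangular after reordering the indices:
`p_{𝒢,T} = (x − a₁ − a₂)·p_{G,r}·p_{H,T∪{v}} + q_G·p_{H,T∪{v}} + p_{G,r}·q_H`.
Expanding the right-hand side of the identity gives the same polynomial.
-/

open Polynomial

/-- The bordered matrix `[[a, bᵀ], [b, B]]` over a commutative ring. -/
def corner {R γ : Type*} [CommRing R] (a : R) (b : γ → R) (B : Matrix γ γ R) :
    Matrix (Unit ⊕ γ) (Unit ⊕ γ) R :=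
  Matrix.of fun i j =>
    match i, j with
    | .inl _, .inl _ => a
    | .inl _, .inr k => b k
    | .inr k, .inl _ => b k
    | .inr k, .inr l => B k l

namespace Matrix

variable {S ι γ η : Type*} [CommRing S]

def bordered (t : S) (r c : ι → S) (N : Matrix ι ι S) : Matrix (Unit ⊕ ι) (Unit ⊕ ι) S :=
  fromBlocks (of fun _ _ => t) (replicateRow Unit r) (replicateCol Unit c) N

section Det

variable [Fintype ι] [DecidableEq ι] [Fintype γ] [DecidableEq γ] [Fintype η] [DecidableEq η]

theorem det_bordered_add_row (t t' : S) (r r' c : ι → S) (N : Matrix ι ι S) :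
    (bordered (t + t') (r + r') c N).det = (bordered t r c N).det + (bordered t' r' c N).det := by
  have hrow : ∀ (s : S) (w : ι → S), bordered s w c N =
      (bordered (t + t') (r + r') c N).updateRow (.inl ()) (Sum.elim (fun _ => s) w) := by
    intro s w
    ext (_ | i) (_ | j) <;> simp [bordered, updateRow_apply]
  calc (bordered (t + t') (r + r') c N).det
      = ((bordered (t + t') (r + r') c N).updateRow (.inl ())
          (Sum.elim (fun _ => t) r + Sum.elim (fun _ => t') r')).det := by
        rw [← Sum.elim_add_add]; exact congrArg det (hrow _ _)
    _ = (bordered t r c N).det + (bordered t' r' c N).det := by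
        rw [det_updateRow_add, ← hrow, ← hrow]

theorem det_bordered_zero_row (t : S) (c : ι → S) (N : Matrix ι ι S) :
    (bordered t 0 c N).det = t * N.det := by
  rw [bordered, replicateRow_zero, det_fromBlocks_zero₁₂, det_unique]
  rfl

theorem det_bordered_add_corner (t s : S) (r c : ι → S) (N : Matrix ι ι S) :
    (bordered (t + s) r c N).det = (bordered t r c N).det + s * N.det := by
  rw [← add_zero r, det_bordered_add_row, add_zero, det_bordered_zero_row]

theorem det_bordered_sumElim_zero_fromBlocks (t : S) (r : γ → S) (c₁ : γ → S) (c₂ : η → S)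
    (P : Matrix γ γ S) (Q : Matrix η η S) :
    (bordered t (Sum.elim r 0) (Sum.elim c₁ c₂) (fromBlocks P 0 0 Q)).det
      = (bordered t r c₁ P).det * Q.det := by
  have h : reindex (Equiv.sumAssoc Unit γ η).symm (Equiv.sumAssoc Unit γ η).symm
      (bordered t (Sum.elim r 0) (Sum.elim c₁ c₂) (fromBlocks P 0 0 Q))
      = fromBlocks (bordered t r c₁ P) 0 (fromCols (replicateCol Unit c₂) 0) Q := by
    ext ((_ | i) | i) ((_ | j) | j) <;> simp [bordered, fromCols]
  rw [← det_reindex_self (Equiv.sumAssoc Unit γ η).symm, h, det_fromBlocks_zero₁₂]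

theorem det_bordered_sumElim_fromBlocks_comm (t : S) (r₁ c₁ : γ → S) (r₂ c₂ : η → S)
    (P : Matrix γ γ S) (Q : Matrix η η S) :
    (bordered t (Sum.elim r₁ r₂) (Sum.elim c₁ c₂) (fromBlocks P 0 0 Q)).det
      = (bordered t (Sum.elim r₂ r₁) (Sum.elim c₂ c₁) (fromBlocks Q 0 0 P)).det := by
  let e := Equiv.sumCongr (Equiv.refl Unit) (Equiv.sumComm γ η)
  have h : reindex e e (bordered t (Sum.elim r₁ r₂) (Sum.elim c₁ c₂) (fromBlocks P 0 0 Q))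
      = bordered t (Sum.elim r₂ r₁) (Sum.elim c₂ c₁) (fromBlocks Q 0 0 P) := by
    ext (_ | i | i) (_ | j | j) <;> simp [e, bordered]
  rw [← h, det_reindex_self]

theorem det_bordered_sumElim_fromBlocks (t : S) (r₁ c₁ : γ → S) (r₂ c₂ : η → S)
    (P : Matrix γ γ S) (Q : Matrix η η S) :
    (bordered t (Sum.elim r₁ r₂) (Sum.elim c₁ c₂) (fromBlocks P 0 0 Q)).det
      = (bordered t r₁ c₁ P).det * Q.det + P.det * (bordered 0 r₂ c₂ Q).det := by
  have hsplit : Sum.elim r₁ r₂ = Sum.elim r₁ 0 + Sum.elim (0 : γ → S) r₂ := by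
    rw [← Sum.elim_add_add, add_zero, zero_add]
  rw [← add_zero t, hsplit, det_bordered_add_row, det_bordered_sumElim_fromBlocks_comm 0,
    det_bordered_sumElim_zero_fromBlocks, det_bordered_sumElim_zero_fromBlocks, add_zero,
    mul_comm P.det]

theorem charmatrix_bordered (t : S) (r c : ι → S) (N : Matrix ι ι S) :
    charmatrix (bordered t r c N)
      = bordered (X - C t) (fun i => -C (r i)) (fun i => -C (c i)) (charmatrix N) := by
  rw [bordered, bordered, charmatrix_fromBlocks]
  rfl

end Det

end Matrix

open Matrix

theorem corner_eq_bordered {S ι : Type*} [CommRing S] (a : S) (u : ι → S) (D : Matrix ι ι S) :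
    corner a u D = bordered a u u D := by
  ext (_ | i) (_ | j) <;> rfl

theorem charpoly_corner_sumElim_fromBlocks {S γ η : Type*} [CommRing S]
    [Fintype γ] [DecidableEq γ] [Fintype η] [DecidableEq η]
    (a₁ a₂ : S) (b : γ → S) (c : η → S) (B : Matrix γ γ S) (D : Matrix η η S) :
    (corner (a₁ + a₂) (Sum.elim b c) (fromBlocks B 0 0 D)).charpoly
      = B.charpoly * (corner a₂ c D).charpoly + (corner a₁ b B).charpoly * D.charpoly
        - X * B.charpoly * D.charpoly := by
  have hborder : (fun i => -C (Sum.elim b c i))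
      = Sum.elim (fun i => -C (b i)) (fun i => -C (c i)) := by
    ext (i | i) <;> rfl
  have hblocks :
      charmatrix (fromBlocks B 0 0 D) = fromBlocks (charmatrix B) 0 0 (charmatrix D) := by
    simp [charmatrix_fromBlocks]
  have h₁ : X - C a₁ = X - C (a₁ + a₂) + C a₂ := by rw [C_add]; ring
  have h₂ : X - C a₂ = 0 + (X - C a₂) := (zero_add _).symm
  simp only [charpoly, corner_eq_bordered, charmatrix_bordered, hborder, hblocks,
    det_bordered_sumElim_fromBlocks]
  rw [h₁, h₂, det_bordered_add_corner, det_bordered_add_corner]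
  ring

/-- Indices: `Unit` is the cut vertex `v`, `γ` is the first block (`G` minus its root `r`),
`η` is the second block (`H` minus `v`), and `T ⊆ η` is the set of deleted rows/columns. -/
theorem stmt_13 {R γ η : Type*} [CommRing R]
    [Fintype γ] [DecidableEq γ] [Fintype η] [DecidableEq η]
    (M : Matrix (Unit ⊕ (γ ⊕ η)) (Unit ⊕ (γ ⊕ η)) R)
    (hsymm : M.IsSymm)
    (hzero : ∀ (g : γ) (h : η),
      M (.inr (.inl g)) (.inr (.inr h)) = 0 ∧ M (.inr (.inr h)) (.inr (.inl g)) = 0)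
    (a₁ a₂ : R) (hd : M (.inl ()) (.inl ()) = a₁ + a₂)
    (T : Finset η) :
    -- p_{𝒢,T}
    (M.submatrix
        (Sum.map id (Sum.map id (Subtype.val : {h : η // h ∉ T} → η)))
        (Sum.map id (Sum.map id Subtype.val))).charpoly
      = -- p_{G,r} · p_{H,T}
        (M.submatrix (fun g : γ => (.inr (.inl g) : Unit ⊕ (γ ⊕ η)))
            (fun g : γ => .inr (.inl g))).charpoly
          * (corner a₂ (fun h : {h : η // h ∉ T} => M (.inl ()) (.inr (.inr h.1)))
              (M.submatrix (fun h : {h : η // h ∉ T} => (.inr (.inr h.1) : Unit ⊕ (γ ⊕ η)))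
                (fun h => .inr (.inr h.1)))).charpoly
        + -- p_G · p_{H,T∪{v}}
          (corner a₁ (fun g : γ => M (.inl ()) (.inr (.inl g)))
              (M.submatrix (fun g : γ => (.inr (.inl g) : Unit ⊕ (γ ⊕ η)))
                (fun g : γ => .inr (.inl g)))).charpoly
            * (M.submatrix (fun h : {h : η // h ∉ T} => (.inr (.inr h.1) : Unit ⊕ (γ ⊕ η)))
                (fun h => .inr (.inr h.1))).charpoly
        - -- x · p_{G,r} · p_{H,T∪{v}}
          X * (M.submatrix (fun g : γ => (.inr (.inl g) : Unit ⊕ (γ ⊕ η)))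
              (fun g : γ => .inr (.inl g))).charpoly
            * (M.submatrix (fun h : {h : η // h ∉ T} => (.inr (.inr h.1) : Unit ⊕ (γ ⊕ η)))
                (fun h => .inr (.inr h.1))).charpoly := by
  refine (congrArg charpoly ?_).trans (charpoly_corner_sumElim_fromBlocks a₁ a₂ _ _ _ _)
  ext (_ | g | h) (_ | g' | h') <;>
    simp [corner, hd, (hzero _ _).1, (hzero _ _).2, hsymm.apply]
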